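/- arXiv:1905.10280 — 4 statements merged into one kernel-verified Lean document; each statement's English description precedes it below -/
import Mathlib

section
/- For every integer m ≥ 2 and every real z > 0, one has ψ_m(z)² < ψ_{m+1}(z)·ψ_{m−1}(z); equivalently, in terms of the series S_j, m·S_{m+1}(z)² < (m+1)·S_m(z)·S_{m+2}(z). -/
/-- `S j z = ∑_{k=0}^∞ 1/(z+k)^j`, the series defining the polygamma functions. -/
noncomputable def S (j : ℕ) (z : ℝ) : ℝ := ∑' k : ℕ, 1 / (z + k) ^ j

/-- `ψ_m(z) = (−1)^{m+1} m! S_{m+1}(z)`, the polygamma function. -/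
noncomputable def psi (m : ℕ) (z : ℝ) : ℝ := (-1 : ℝ) ^ (m + 1) * (Nat.factorial m) * S (m + 1) z

lemma S_summable {j : ℕ} (hj : 2 ≤ j) {z : ℝ} (hz : 0 < z) :
    Summable (fun k : ℕ => 1 / (z + k) ^ j) := by
  rw [← summable_nat_add_iff 1]
  have hbase : Summable (fun k : ℕ => 1 / ((k : ℝ)) ^ j) :=
    Real.summable_one_div_nat_pow.mpr (by omega)
  have hshift : Summable (fun k : ℕ => 1 / ((k : ℝ) + 1) ^ j) := by
    have := (summable_nat_add_iff (f := fun k : ℕ => 1 / ((k : ℝ)) ^ j) 1).mpr hbase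
    simpa using this
  refine Summable.of_nonneg_of_le (fun k => ?_) (fun k => ?_) hshift
  · positivity
  · have h1 : (0 : ℝ) < (k : ℝ) + 1 := by positivity
    have h2 : ((k : ℝ) + 1) ≤ z + ((k : ℕ) + 1 : ℕ) := by
      push_cast; linarith
    gcongr

lemma S_pos {j : ℕ} (hj : 2 ≤ j) {z : ℝ} (hz : 0 < z) : 0 < S j z := by
  refine Summable.tsum_pos (S_summable hj hz) (fun k => by positivity) 0 ?_
  have : (0:ℝ) < z + (0:ℕ) := by simpa using hz
  positivity

lemma S_cauchy_schwarz (m : ℕ) (hm : 2 ≤ m) {z : ℝ} (hz : 0 < z) :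
    S (m + 1) z ^ 2 ≤ S m z * S (m + 2) z := by
  have hpos : ∀ k : ℕ, (0:ℝ) < z + k := fun k => by positivity
  have hsum1 := S_summable (by omega : 2 ≤ m + 1) hz
  have hsum0 := S_summable hm hz
  have hsum2 := S_summable (by omega : 2 ≤ m + 2) hz
  -- ∑' fg ≤ √(AB) via partial sums
  set A := S m z with hA
  set B := S (m + 2) z with hB
  have hA0 : 0 < A := S_pos hm hz
  have hB0 : 0 < B := S_pos (by omega) hz
  have key : S (m + 1) z ≤ Real.sqrt (A * B) := by
    refine Summable.tsum_le_of_sum_le hsum1 (fun s => ?_)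
    have hcs : (∑ k ∈ s, 1 / (z + k) ^ (m + 1)) ^ 2 ≤
        (∑ k ∈ s, 1 / (z + k) ^ m) * (∑ k ∈ s, 1 / (z + k) ^ (m + 2)) := by
      refine Finset.sum_sq_le_sum_mul_sum_of_sq_eq_mul s
        (fun k _ => by positivity) (fun k _ => by positivity) (fun k _ => ?_)
      rw [div_pow, div_mul_div_comm, one_pow, one_mul, ← pow_mul, ← pow_add]
      norm_num; ring_nf
    have h1 : (∑ k ∈ s, 1 / (z + k) ^ m) ≤ A :=
      Summable.sum_le_tsum s (fun k _ => by positivity) hsum0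
    have h2 : (∑ k ∈ s, 1 / (z + k) ^ (m + 2)) ≤ B :=
      Summable.sum_le_tsum s (fun k _ => by positivity) hsum2
    have hAB : (∑ k ∈ s, 1 / (z + k) ^ (m + 1)) ^ 2 ≤ A * B := by
      refine hcs.trans ?_
      have hs2 : (0:ℝ) ≤ ∑ k ∈ s, 1 / (z + k) ^ (m + 2) :=
        Finset.sum_nonneg fun k _ => by positivity
      nlinarith
    have hsnn : (0:ℝ) ≤ ∑ k ∈ s, 1 / (z + k) ^ (m + 1) :=
      Finset.sum_nonneg fun k _ => by positivity
    calc ∑ k ∈ s, 1 / (z + k) ^ (m + 1)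
        = Real.sqrt ((∑ k ∈ s, 1 / (z + k) ^ (m + 1)) ^ 2) := by
          rw [Real.sqrt_sq hsnn]
      _ ≤ Real.sqrt (A * B) := Real.sqrt_le_sqrt hAB
  have hS1nn : 0 ≤ S (m + 1) z := tsum_nonneg (fun k => by positivity)
  calc S (m + 1) z ^ 2 ≤ Real.sqrt (A * B) ^ 2 := by gcongr
    _ = A * B := Real.sq_sqrt (by positivity)

/-- For every integer `m ≥ 2` and real `z > 0`,
`ψ_m(z)² < ψ_{m+1}(z)·ψ_{m−1}(z)`; equivalently,
`m·S_{m+1}(z)² < (m+1)·S_m(z)·S_{m+2}(z)`. -/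
theorem polygamma_sq_lt (m : ℕ) (hm : 2 ≤ m) (z : ℝ) (hz : 0 < z) :
    psi m z ^ 2 < psi (m + 1) z * psi (m - 1) z ∧
    (m : ℝ) * S (m + 1) z ^ 2 < ((m : ℝ) + 1) * S m z * S (m + 2) z := by
  have hcs := S_cauchy_schwarz m hm hz
  have hA : 0 < S m z := S_pos hm hz
  have hB : 0 < S (m + 2) z := S_pos (by omega) hz
  have hmain : (m : ℝ) * S (m + 1) z ^ 2 < ((m : ℝ) + 1) * S m z * S (m + 2) z := by
    have hm0 : (0:ℝ) < m := by exact_mod_cast (by omega : 0 < m)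
    calc (m : ℝ) * S (m + 1) z ^ 2 ≤ (m : ℝ) * (S m z * S (m + 2) z) := by
          gcongr
      _ < ((m : ℝ) + 1) * (S m z * S (m + 2) z) := by
          have : 0 < S m z * S (m + 2) z := mul_pos hA hB
          nlinarith
      _ = ((m : ℝ) + 1) * S m z * S (m + 2) z := by ring
  refine ⟨?_, hmain⟩
  -- unfold psi
  have hm1 : m - 1 + 1 = m := by omega
  have hpow : ((-1 : ℝ)) ^ (m + 1 + 1) * (-1 : ℝ) ^ m = 1 := by
    rw [← pow_add]
    have : m + 1 + 1 + m = 2 * (m + 1) := by omega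
    rw [this, pow_mul]; norm_num
  have hψsq : psi m z ^ 2 = ((Nat.factorial m : ℝ)) ^ 2 * S (m + 1) z ^ 2 := by
    unfold psi
    rw [mul_pow, mul_pow, ← pow_mul]
    have : (m + 1) * 2 = 2 * (m + 1) := by ring
    rw [this, pow_mul]
    norm_num
  have hψprod : psi (m + 1) z * psi (m - 1) z =
      ((Nat.factorial (m + 1) : ℝ) * (Nat.factorial (m - 1) : ℝ)) * (S (m + 2) z * S m z) := by
    unfold psi
    rw [hm1]
    show (-1 : ℝ) ^ (m + 1 + 1) * (Nat.factorial (m + 1)) * S (m + 2) z *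
          ((-1 : ℝ) ^ m * (Nat.factorial (m - 1)) * S m z) = _
    calc (-1 : ℝ) ^ (m + 1 + 1) * (Nat.factorial (m + 1)) * S (m + 2) z *
          ((-1 : ℝ) ^ m * (Nat.factorial (m - 1)) * S m z)
        = ((-1 : ℝ) ^ (m + 1 + 1) * (-1 : ℝ) ^ m) *
            ((Nat.factorial (m + 1) : ℝ) * (Nat.factorial (m - 1) : ℝ)) *
            (S (m + 2) z * S m z) := by ring
      _ = _ := by rw [hpow]; ring
  rw [hψsq, hψprod]
  -- (m!)² = m * (m+1-stuff)... relate factorials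
  have hfac : ((Nat.factorial (m + 1) : ℝ) * (Nat.factorial (m - 1) : ℝ)) * (m : ℝ) =
      ((Nat.factorial m : ℝ)) ^ 2 * ((m : ℝ) + 1) := by
    have h1 : Nat.factorial (m + 1) = (m + 1) * Nat.factorial m := Nat.factorial_succ m
    have h2 : Nat.factorial m = m * Nat.factorial (m - 1) := by
      conv_lhs => rw [← hm1]
      rw [Nat.factorial_succ, hm1]
    rw [h1]
    push_cast
    rw [h2]
    push_cast
    ring
  have hfacpos : (0:ℝ) < (Nat.factorial (m - 1) : ℝ) := by
    exact_mod_cast Nat.factorial_pos _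
  have hm0 : (0:ℝ) < m := by exact_mod_cast (by omega : 0 < m)
  -- multiply hmain by (m-1)! * m! ... instead use nlinarith with hfac
  have hgoal : ((Nat.factorial m : ℝ)) ^ 2 * ((m : ℝ) * S (m + 1) z ^ 2) <
      ((Nat.factorial m : ℝ)) ^ 2 * (((m : ℝ) + 1) * S m z * S (m + 2) z) := by
    have : (0:ℝ) < ((Nat.factorial m : ℝ)) ^ 2 := by positivity
    exact (mul_lt_mul_iff_right₀ this).mpr hmain
  have hfacm : (0:ℝ) < (Nat.factorial m : ℝ) := by exact_mod_cast Nat.factorial_pos m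
  have hfacm1 : (0:ℝ) < (Nat.factorial (m + 1) : ℝ) := by exact_mod_cast Nat.factorial_pos _
  nlinarith [hgoal, hfac]
end

section
/- For every real θ > 0, every real y > 0, and all integers 0 ≤ n ≤ m, one has T_{n,m} + T_{m,n} > 0 (where T_{m,n} is obtained from T_{n,m} by exchanging the roles of n and m). -/
/-- The summand `T_{n,m}` appearing in the steep-descent analysis. -/
noncomputable def T (θ y : ℝ) (n m : ℕ) : ℝ :=
  -12 * ((m : ℝ) + θ) ^ 2 * y / (((n : ℝ) + θ) ^ 3 * (((m : ℝ) + θ) ^ 2 + y ^ 2) ^ 3)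
    + 12 * ((m : ℝ) + θ) * y / (((n : ℝ) + θ) ^ 4 * (((m : ℝ) + θ) ^ 2 + y ^ 2) ^ 2)

lemma Q_pos (a b y : ℝ) (ha : 0 < a) (hab : a ≤ b) (hy : 0 < y) :
    0 < (a^5+b^5)*y^6 + ((b-a)*(b^6-a^6)+3*a^2*b^2*(a^3+b^3))*y^4
      + 3*a^2*b^2*((b-a)*(b^4-a^4)+a^2*b^2*(a+b))*y^2
      + a^4*b^4*(a+b)*(3*(a-b)^2+a*b) := by
  have hb : 0 < b := lt_of_lt_of_le ha hab
  have hd : 0 ≤ b - a := sub_nonneg.2 hab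
  have h6 : a^6 ≤ b^6 := pow_le_pow_left₀ ha.le hab 6
  have h4 : a^4 ≤ b^4 := pow_le_pow_left₀ ha.le hab 4
  have t2 : 0 ≤ (b-a)*(b^6-a^6) := mul_nonneg hd (sub_nonneg.2 h6)
  have t3 : 0 ≤ (b-a)*(b^4-a^4) := mul_nonneg hd (sub_nonneg.2 h4)
  have t4 : 0 < a^4*b^4*(a+b)*(3*(a-b)^2+a*b) := by positivity
  have t1 : 0 < (a^5+b^5)*y^6 := by positivity
  nlinarith [mul_nonneg t2 (pow_pos hy 4).le,
    mul_nonneg (mul_nonneg (by positivity : (0:ℝ) ≤ 3*a^2*b^2) t3) (pow_pos hy 2).le,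
    mul_nonneg (by positivity : (0:ℝ) ≤ 3*a^2*b^2*(a^2*b^2*(a+b))) (pow_pos hy 2).le,
    mul_nonneg (by positivity : (0:ℝ) ≤ 3*a^2*b^2*(a^3+b^3)) (pow_pos hy 4).le]

lemma key (a b y : ℝ) (ha : 0 < a) (hab : a ≤ b) (hy : 0 < y) :
    0 < (-12 * b ^ 2 * y / (a ^ 3 * (b ^ 2 + y ^ 2) ^ 3)
        + 12 * b * y / (a ^ 4 * (b ^ 2 + y ^ 2) ^ 2))
      + (-12 * a ^ 2 * y / (b ^ 3 * (a ^ 2 + y ^ 2) ^ 3)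
        + 12 * a * y / (b ^ 4 * (a ^ 2 + y ^ 2) ^ 2)) := by
  have hb : 0 < b := lt_of_lt_of_le ha hab
  have hA : 0 < a ^ 2 + y ^ 2 := by positivity
  have hB : 0 < b ^ 2 + y ^ 2 := by positivity
  have hQ := Q_pos a b y ha hab hy
  have hEq : (-12 * b ^ 2 * y / (a ^ 3 * (b ^ 2 + y ^ 2) ^ 3)
        + 12 * b * y / (a ^ 4 * (b ^ 2 + y ^ 2) ^ 2))
      + (-12 * a ^ 2 * y / (b ^ 3 * (a ^ 2 + y ^ 2) ^ 3)
        + 12 * a * y / (b ^ 4 * (a ^ 2 + y ^ 2) ^ 2))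
      = 12 * y ^ 3 * ((a^5+b^5)*y^6 + ((b-a)*(b^6-a^6)+3*a^2*b^2*(a^3+b^3))*y^4
          + 3*a^2*b^2*((b-a)*(b^4-a^4)+a^2*b^2*(a+b))*y^2
          + a^4*b^4*(a+b)*(3*(a-b)^2+a*b))
        / (a ^ 4 * b ^ 4 * (a ^ 2 + y ^ 2) ^ 3 * (b ^ 2 + y ^ 2) ^ 3) := by
    field_simp
    ring
  rw [hEq]
  positivity

/-- For every real `θ > 0`, real `y > 0` and integers `0 ≤ n ≤ m`,
one has `T_{n,m} + T_{m,n} > 0`. -/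
theorem T_add_T_pos (θ y : ℝ) (hθ : 0 < θ) (hy : 0 < y) (n m : ℕ) (hnm : n ≤ m) :
    0 < T θ y n m + T θ y m n := by
  have ha : 0 < (n : ℝ) + θ := by positivity
  have hab : (n : ℝ) + θ ≤ (m : ℝ) + θ := by
    have : (n : ℝ) ≤ (m : ℝ) := Nat.cast_le.2 hnm
    linarith
  have := key ((n : ℝ) + θ) ((m : ℝ) + θ) y ha hab hy
  simpa [T] using this
end

section
/- For all reals θ > 0 and ε > 0 there exists M > 0 such that for every real y with |y| ≥ M, e^{−(π/2 + ε)|y|} ≤ |Γ(θ + iy)| ≤ e^{−(π/2 − ε)|y|}, where Γ is the complex Gamma function. -/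
/-!
By Euler's product, `x ↦ |Γ(x + iy)| / Γ(x)` is nondecreasing on `(0, ∞)` for each fixed `y`:
it is the limit of `∏ⱼ (x + j) / |x + j + iy|`, whose factors are nondecreasing in `x`.
Combined with `Γ(s + n) = s (s + 1) ⋯ (s + n - 1) Γ(s)`, this makes `|Γ(θ + iy)|` and
`|Γ(1/2 + iy)|` agree up to factors polynomial in `|y|`. On the line `Re s = 1/2` the reflection
formula gives `|Γ(1/2 + iy)|² = π / cosh (π y)`, which is `e^{-π|y|}` up to a factor between
`π` and `2π`, and the polynomial factors are absorbed into `e^{±ε|y|}`.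
-/

open Complex Filter Finset Topology
open scoped Real

lemma div_norm_add_mul_I_le {a b : ℝ} (y : ℝ) (ha : 0 < a) (hab : a ≤ b) :
    a / ‖(a : ℂ) + y * I‖ ≤ b / ‖(b : ℂ) + y * I‖ := by
  have hb : 0 < b := ha.trans_le hab
  rw [norm_add_mul_I, norm_add_mul_I, div_le_div_iff₀ (by positivity) (by positivity),
    ← pow_le_pow_iff_left₀ (by positivity) (by positivity) two_ne_zero, mul_pow, mul_pow,
    Real.sq_sqrt (by positivity), Real.sq_sqrt (by positivity)]
  nlinarith [mul_le_mul hab hab ha.le hb.le, sq_nonneg y]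

lemma norm_GammaSeq_add_mul_I_div {x : ℝ} (y : ℝ) (hx : 0 < x) {n : ℕ} (hn : n ≠ 0) :
    ‖GammaSeq (x + y * I) n‖ / Real.GammaSeq x n =
      ∏ j ∈ range (n + 1), (x + j) / ‖((x + j : ℝ) : ℂ) + y * I‖ := by
  have hpos : 0 < ∏ j ∈ range (n + 1), (x + j) := prod_pos fun j _ => by positivity
  have hn' : (0 : ℝ) < n := by positivity
  have hfac : ∀ j : ℕ, (x : ℂ) + y * I + j = ((x + j : ℝ) : ℂ) + y * I := fun j => by
    push_cast; ring
  rw [Complex.GammaSeq, Real.GammaSeq, norm_div, norm_mul, norm_prod, prod_div_distrib,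
    show ((n : ℂ)) = ((n : ℝ) : ℂ) by push_cast; ring, norm_cpow_eq_rpow_re_of_pos hn']
  simp only [hfac, add_re, ofReal_re, mul_re, I_re, I_im, ofReal_im, mul_zero, mul_one, sub_zero,
    add_zero, Complex.norm_natCast]
  field_simp

lemma tendsto_prod_div_norm_add_mul_I {x : ℝ} (y : ℝ) (hx : 0 < x) :
    Tendsto (fun n : ℕ => ∏ j ∈ range (n + 1), (x + j) / ‖((x + j : ℝ) : ℂ) + y * I‖) atTop
      (𝓝 (‖Gamma (x + y * I)‖ / Real.Gamma x)) := by
  refine ((Complex.GammaSeq_tendsto_Gamma _).norm.div (Real.GammaSeq_tendsto_Gamma x)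
    (Real.Gamma_pos_of_pos hx).ne').congr' ?_
  filter_upwards [eventually_ne_atTop 0] with n hn
  exact norm_GammaSeq_add_mul_I_div y hx hn

theorem monotoneOn_norm_Gamma_add_mul_I_div_Gamma (y : ℝ) :
    MonotoneOn (fun x : ℝ => ‖Gamma (x + y * I)‖ / Real.Gamma x) (Set.Ioi 0) :=
  fun a ha b hb hab => le_of_tendsto_of_tendsto' (tendsto_prod_div_norm_add_mul_I y ha)
    (tendsto_prod_div_norm_add_mul_I y hb) fun n => prod_le_prod
      (fun j _ => div_nonneg (by linarith [ha.out, j.cast_nonneg (α := ℝ)]) (norm_nonneg _))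
      fun j _ => div_norm_add_mul_I_le y (by linarith [ha.out, j.cast_nonneg (α := ℝ)])
        (by linarith)

lemma norm_Gamma_add_nat_le {z : ℂ} (hz : ∀ k : ℕ, z ≠ -k) (n : ℕ) :
    ‖Gamma (z + n)‖ ≤ (‖z‖ + n) ^ n * ‖Gamma z‖ := by
  induction n with
  | zero => simp
  | succ n ih =>
    have hzn : z + n ≠ 0 := fun h => hz n (eq_neg_of_add_eq_zero_left h)
    have hnorm : ‖z + n‖ ≤ ‖z‖ + n := (norm_add_le _ _).trans_eq (by simp)
    push_cast
    rw [← add_assoc, Gamma_add_one _ hzn, norm_mul]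
    calc ‖z + n‖ * ‖Gamma (z + n)‖
        ≤ (‖z‖ + (n + 1)) * ((‖z‖ + (n + 1)) ^ n * ‖Gamma z‖) := by
          gcongr
          · linarith
          · exact ih.trans (by gcongr; linarith)
      _ = (‖z‖ + (n + 1)) ^ (n + 1) * ‖Gamma z‖ := by ring

theorem exists_norm_Gamma_add_mul_I_le {x₁ x₂ : ℝ} (hx₁ : 0 < x₁) (hx₂ : 0 < x₂) :
    ∃ C > 0, ∃ k : ℕ, ∀ y : ℝ,
      ‖Gamma (x₁ + y * I)‖ ≤ C * (1 + |y|) ^ k * ‖Gamma (x₂ + y * I)‖ := by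
  set n := ⌈x₁ - x₂⌉₊
  set x₃ := x₂ + n
  have hx₁₃ : x₁ ≤ x₃ := by linarith [Nat.le_ceil (x₁ - x₂)]
  have hx₃ : 0 < x₃ := hx₁.trans_le hx₁₃
  have hΓ₃ := Real.Gamma_pos_of_pos hx₃
  refine ⟨Real.Gamma x₁ / Real.Gamma x₃ * (x₃ + 1) ^ n,
    by positivity [Real.Gamma_pos_of_pos hx₁], n, fun y => ?_⟩
  have hmono := monotoneOn_norm_Gamma_add_mul_I_div_Gamma y hx₁ hx₃ hx₁₃
  rw [div_le_div_iff₀ (Real.Gamma_pos_of_pos hx₁) hΓ₃] at hmono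
  have hshift : ‖Gamma (x₃ + y * I)‖ ≤ (‖(x₂ : ℂ) + y * I‖ + n) ^ n * ‖Gamma (x₂ + y * I)‖ := by
    have hz : ∀ k : ℕ, (x₂ : ℂ) + y * I ≠ -k := fun k h => by
      have : x₂ = -k := by simpa using congrArg re h
      linarith [k.cast_nonneg (α := ℝ)]
    convert norm_Gamma_add_nat_le hz n using 3
    simp only [x₃]; push_cast; ring
  have hbase : ‖(x₂ : ℂ) + y * I‖ + n ≤ (x₃ + 1) * (1 + |y|) := by
    have : ‖(x₂ : ℂ) + y * I‖ ≤ x₂ + |y| :=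
      (norm_add_le _ _).trans_eq (by simp [abs_of_pos hx₂])
    nlinarith [abs_nonneg y]
  calc ‖Gamma (x₁ + y * I)‖ ≤ Real.Gamma x₁ / Real.Gamma x₃ * ‖Gamma (x₃ + y * I)‖ := by
        rw [div_mul_eq_mul_div, le_div_iff₀ hΓ₃]; linarith
    _ ≤ Real.Gamma x₁ / Real.Gamma x₃ *
          (((x₃ + 1) * (1 + |y|)) ^ n * ‖Gamma (x₂ + y * I)‖) := by
        gcongr
        exact hshift.trans (by gcongr)
    _ = _ := by rw [mul_pow]; ring

theorem norm_Gamma_one_half_add_mul_I_sq (y : ℝ) :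
    ‖Gamma ((1 / 2 : ℝ) + y * I)‖ ^ 2 = π / Real.cosh (π * y) := by
  set z : ℂ := (1 / 2 : ℝ) + y * I
  have hconj : 1 - z = (starRingEnd ℂ) z := by
    apply Complex.ext <;> norm_num [z]
  have hsin : Complex.sin (π * z) = Real.cosh (π * y) := by
    rw [show (π : ℂ) * z = π / 2 + (π * y : ℝ) * I by simp only [z]; push_cast; ring,
      Complex.sin_add_mul_I, Complex.sin_pi_div_two, Complex.cos_pi_div_two, ofReal_cosh]
    ring
  have h := Gamma_mul_Gamma_one_sub z
  rw [hconj, Gamma_conj, mul_conj, hsin, ← ofReal_div] at h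
  rw [← normSq_eq_norm_sq]
  exact_mod_cast h

lemma exp_abs_le_two_mul_cosh (x : ℝ) : Real.exp |x| ≤ 2 * Real.cosh x := by
  rw [Real.cosh_eq]; linarith [Real.exp_abs_le x]

lemma cosh_le_exp_abs (x : ℝ) : Real.cosh x ≤ Real.exp |x| := by
  rw [← Real.cosh_abs, Real.cosh_eq]
  linarith [Real.exp_le_exp.2 (neg_le_self (abs_nonneg x))]

theorem norm_Gamma_one_half_add_mul_I_le (y : ℝ) :
    ‖Gamma ((1 / 2 : ℝ) + y * I)‖ ≤ √(2 * π) * Real.exp (-(π / 2) * |y|) := by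
  rw [← pow_le_pow_iff_left₀ (norm_nonneg _) (by positivity) two_ne_zero,
    norm_Gamma_one_half_add_mul_I_sq, mul_pow, Real.sq_sqrt (by positivity), ← Real.exp_nat_mul,
    div_le_iff₀ (Real.cosh_pos _)]
  calc π = 2 * π * Real.exp (-(π * |y|)) * (Real.exp (π * |y|) / 2) := by
        rw [Real.exp_neg]; field_simp
    _ ≤ 2 * π * Real.exp (-(π * |y|)) * Real.cosh (π * y) := by
        gcongr
        have := exp_abs_le_two_mul_cosh (π * y)
        rw [abs_mul, abs_of_pos Real.pi_pos] at this
        linarith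
    _ = _ := by push_cast; ring_nf

theorem le_norm_Gamma_one_half_add_mul_I (y : ℝ) :
    √π * Real.exp (-(π / 2) * |y|) ≤ ‖Gamma ((1 / 2 : ℝ) + y * I)‖ := by
  rw [← pow_le_pow_iff_left₀ (by positivity) (norm_nonneg _) two_ne_zero,
    norm_Gamma_one_half_add_mul_I_sq, mul_pow, Real.sq_sqrt Real.pi_pos.le, ← Real.exp_nat_mul,
    le_div_iff₀ (Real.cosh_pos _)]
  calc π * Real.exp (2 * (-(π / 2) * |y|)) * Real.cosh (π * y)
      ≤ π * Real.exp (-(π * |y|)) * Real.exp (π * |y|) := by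
        gcongr
        · exact le_of_eq (by ring_nf)
        · simpa [abs_mul, abs_of_pos Real.pi_pos] using cosh_le_exp_abs (π * y)
    _ = π := by rw [mul_assoc, ← Real.exp_add]; simp

lemma eventually_mul_one_add_pow_le_exp (C : ℝ) (k : ℕ) {ε : ℝ} (hε : 0 < ε) :
    ∀ᶠ t in atTop, C * (1 + t) ^ k ≤ Real.exp (ε * t) := by
  have h := ((isLittleO_pow_exp_pos_mul_atTop k hε).comp_tendsto
    (tendsto_atTop_add_const_left atTop 1 tendsto_id)).const_mul_left C
  filter_upwards [h.def (Real.exp_pos (-ε))] with t ht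
  simp only [Function.comp_apply, id, Real.norm_eq_abs, Real.abs_exp] at ht
  calc C * (1 + t) ^ k ≤ |C * (1 + t) ^ k| := le_abs_self _
    _ ≤ Real.exp (-ε) * Real.exp (ε * (1 + t)) := ht
    _ = Real.exp (ε * t) := by rw [← Real.exp_add]; ring_nf

theorem eventually_norm_Gamma_add_mul_I_le {θ ε : ℝ} (hθ : 0 < θ) (hε : 0 < ε) :
    ∀ᶠ y : ℝ in comap (fun y => |y|) atTop,
      ‖Gamma (θ + y * I)‖ ≤ Real.exp (-(π / 2 - ε) * |y|) := by
  obtain ⟨C, hC₀, k, hC⟩ := exists_norm_Gamma_add_mul_I_le hθ one_half_pos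
  filter_upwards [(eventually_mul_one_add_pow_le_exp (C * √(2 * π)) k hε).comap _] with y hy
  calc ‖Gamma (θ + y * I)‖ ≤ C * (1 + |y|) ^ k * ‖Gamma ((1 / 2 : ℝ) + y * I)‖ := hC y
    _ ≤ C * (1 + |y|) ^ k * (√(2 * π) * Real.exp (-(π / 2) * |y|)) := by
        gcongr
        exact norm_Gamma_one_half_add_mul_I_le y
    _ ≤ Real.exp (ε * |y|) * Real.exp (-(π / 2) * |y|) := by
        rw [← mul_assoc]; gcongr; linarith
    _ = Real.exp (-(π / 2 - ε) * |y|) := by rw [← Real.exp_add]; ring_nf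

theorem eventually_le_norm_Gamma_add_mul_I {θ ε : ℝ} (hθ : 0 < θ) (hε : 0 < ε) :
    ∀ᶠ y : ℝ in comap (fun y => |y|) atTop,
      Real.exp (-(π / 2 + ε) * |y|) ≤ ‖Gamma (θ + y * I)‖ := by
  obtain ⟨C, hC₀, k, hC⟩ := exists_norm_Gamma_add_mul_I_le one_half_pos hθ
  filter_upwards [(eventually_mul_one_add_pow_le_exp (C / √π) k hε).comap _] with y hy
  have hsqrt : 0 < √π := Real.sqrt_pos.2 Real.pi_pos
  calc Real.exp (-(π / 2 + ε) * |y|)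
      = Real.exp (-(π / 2) * |y|) * Real.exp (-(ε * |y|)) := by rw [← Real.exp_add]; ring_nf
    _ ≤ ‖Gamma ((1 / 2 : ℝ) + y * I)‖ / √π * Real.exp (-(ε * |y|)) := by
        gcongr
        rw [le_div_iff₀ hsqrt, mul_comm]
        exact le_norm_Gamma_one_half_add_mul_I y
    _ ≤ C / √π * (1 + |y|) ^ k * ‖Gamma (θ + y * I)‖ * Real.exp (-(ε * |y|)) := by
        gcongr
        rw [div_le_iff₀ hsqrt]
        exact (hC y).trans_eq (by field_simp)
    _ ≤ Real.exp (ε * |y|) * ‖Gamma (θ + y * I)‖ * Real.exp (-(ε * |y|)) := by gcongr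
    _ = ‖Gamma (θ + y * I)‖ := by
        rw [mul_right_comm, ← Real.exp_add, add_neg_cancel, Real.exp_zero, one_mul]

/-- For all `θ > 0` and `ε > 0` there exists `M > 0` such that for `|y| ≥ M`,
`e^{−(π/2+ε)|y|} ≤ |Γ(θ + iy)| ≤ e^{−(π/2−ε)|y|}`. -/
theorem gamma_asymptotic_bounds (θ ε : ℝ) (hθ : 0 < θ) (hε : 0 < ε) :
    ∃ M : ℝ, 0 < M ∧ ∀ y : ℝ, M ≤ |y| →
      Real.exp (-(π / 2 + ε) * |y|) ≤ ‖Complex.Gamma ((θ : ℂ) + y * I)‖ ∧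
      ‖Complex.Gamma ((θ : ℂ) + y * I)‖ ≤ Real.exp (-(π / 2 - ε) * |y|) := by
  obtain ⟨M, hM⟩ := (eventually_comap.1 ((eventually_le_norm_Gamma_add_mul_I hθ hε).and
    (eventually_norm_Gamma_add_mul_I_le hθ hε))).exists_forall_of_atTop
  exact ⟨max M 1, by positivity, fun y hy => hM |y| (le_of_max_le_left hy) y rfl⟩
end

section
/- There exists M > 0 such that for every real t ∈ [0, 1] and every real y with |y| > M, Re[Γ'(t + iy) / Γ(t + iy)] > 0, where Γ is the complex Gamma function and Γ' its complex derivative (so Γ'/Γ is the digamma function ψ). -/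
/-!
Taking logarithmic derivatives in Legendre's duplication formula gives
`ψ(2z) = (ψ(z) + ψ(z + 1/2)) / 2 + log 2`. If `z` lies in the box
`0 ≤ Re z ≤ 1, 2^(k+1) ≤ |Im z| ≤ 2^(k+2)`, then `z/2` and `z/2 + 1/2` lie in the box one level
down, so a lower bound `C` for `Re ψ` on the compact box `|Im z| ∈ [1, 2]` propagates to the lower
bound `C + k log 2` on the `k`-th box, which is positive once `k` is large.
-/

open Complex Set

namespace Complex

theorem digamma_eq_neg_logDeriv_inv_Gamma : digamma = -logDeriv fun s ↦ (Gamma s)⁻¹ := by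
  ext s
  have h := logDeriv_fun_zpow (differentiable_one_div_Gamma s) (-1)
  simp only [zpow_neg_one, inv_inv, Int.cast_neg, Int.cast_one, neg_one_mul] at h
  simp [digamma_def, h]

theorem continuousAt_digamma {s : ℂ} (hs : ∀ m : ℕ, s ≠ -m) : ContinuousAt digamma s := by
  rw [digamma_eq_neg_logDeriv_inv_Gamma]
  have hderiv : Continuous (deriv fun s ↦ (Gamma s)⁻¹) :=
    (differentiable_one_div_Gamma.contDiff (n := 1)).continuous_deriv le_rfl
  exact (hderiv.continuousAt.div (differentiable_one_div_Gamma s).continuousAt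
    (inv_ne_zero (Gamma_ne_zero hs))).neg

theorem IsCompact.bddBelow_re_digamma {K : Set ℂ} (hK : IsCompact K)
    (hpoles : ∀ z ∈ K, ∀ m : ℕ, z ≠ -m) : BddBelow ((fun z ↦ (digamma z).re) '' K) :=
  (hK.image_of_continuousOn fun z hz ↦
    (continuous_re.continuousAt.comp (continuousAt_digamma (hpoles z hz))).continuousWithinAt).bddBelow

theorem digamma_add_digamma_add_half {z : ℂ} (hz : ∀ m : ℕ, 2 * z ≠ -m) :
    digamma z + digamma (z + 1 / 2) = 2 * digamma (2 * z) - 2 * log 2 := by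
  have hz₀ : ∀ m : ℕ, z ≠ -m := fun m h ↦ hz (2 * m) (by rw [h]; push_cast; ring)
  have hz₁ : ∀ m : ℕ, z + 1 / 2 ≠ -m := fun m h ↦ hz (2 * m + 1) (by
    rw [show 2 * z = 2 * (z + 1 / 2) - 1 by ring, h]; push_cast; ring)
  have hpow : HasDerivAt (fun w : ℂ ↦ (2 : ℂ) ^ (1 - 2 * w))
      ((2 : ℂ) ^ (1 - 2 * z) * log 2 * -2) z :=
    ((hasDerivAt_id z).const_mul 2 |>.const_sub 1).const_cpow (.inl two_ne_zero)
      |>.congr_deriv (by simp)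
  have hpow₀ : (2 : ℂ) ^ (1 - 2 * z) ≠ 0 := by simp
  have hGamma₂ : DifferentiableAt ℂ (fun w ↦ Gamma (2 * w)) z :=
    (differentiableAt_Gamma _ hz).comp z (differentiableAt_id.const_mul 2)
  have hlhs : logDeriv (fun w ↦ Gamma w * Gamma (w + 1 / 2)) z =
      digamma z + digamma (z + 1 / 2) := by
    have hshift := logDeriv_comp (g := fun w : ℂ ↦ w + 1 / 2) (x := z)
      (differentiableAt_Gamma _ hz₁) (differentiableAt_id.add_const _)
    rw [logDeriv_mul (f := Gamma) (g := fun w ↦ Gamma (w + 1 / 2)) _ (Gamma_ne_zero hz₀)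
      (Gamma_ne_zero hz₁) (differentiableAt_Gamma _ hz₀)
      ((differentiableAt_Gamma _ hz₁).comp z (differentiableAt_id.add_const _))]
    simp only [Function.comp_def, deriv_add_const, deriv_id'', mul_one] at hshift
    rw [hshift, digamma_def]
  have hrhs : logDeriv (fun w ↦ Gamma (2 * w) * 2 ^ (1 - 2 * w) * √Real.pi) z =
      2 * digamma (2 * z) - 2 * log 2 := by
    have hdouble := logDeriv_comp (g := fun w : ℂ ↦ 2 * w) (x := z)
      (differentiableAt_Gamma _ hz) (differentiableAt_id.const_mul _)
    rw [logDeriv_mul_const _ _ (ofReal_ne_zero.mpr (Real.sqrt_pos.mpr Real.pi_pos).ne'),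
      logDeriv_mul (f := fun w ↦ Gamma (2 * w)) (g := fun w : ℂ ↦ (2 : ℂ) ^ (1 - 2 * w)) _
        (Gamma_ne_zero hz) hpow₀ hGamma₂ hpow.differentiableAt,
      logDeriv_apply (fun w : ℂ ↦ (2 : ℂ) ^ (1 - 2 * w)), hpow.deriv]
    simp only [Function.comp_def, deriv_const_mul_id'] at hdouble
    rw [hdouble, digamma_def]
    field_simp
    ring
  rw [← hlhs, ← hrhs, funext Gamma_mul_Gamma_add_half]

theorem ne_neg_natCast_of_im_ne_zero {z : ℂ} (hz : z.im ≠ 0) (m : ℕ) : z ≠ -m := by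
  rintro rfl
  simp at hz

end Complex

def dyadicBox (k : ℕ) : Set ℂ := {z | z.re ∈ Icc 0 1 ∧ |z.im| ∈ Icc (2 ^ k) (2 ^ (k + 1))}

theorem isCompact_dyadicBox (k : ℕ) : IsCompact (dyadicBox k) := by
  refine Metric.isCompact_of_isClosed_isBounded ?_ ?_
  · exact (isClosed_Icc.preimage continuous_re).inter
      (isClosed_Icc.preimage (continuous_abs.comp continuous_im))
  · exact ((Metric.isBounded_Icc (0 : ℝ) 1).reProdIm
      (Metric.isBounded_Icc (-2 ^ (k + 1) : ℝ) (2 ^ (k + 1)))).subset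
      fun z hz ↦ ⟨hz.1, abs_le.mp hz.2.2⟩

theorem im_ne_zero_of_mem_dyadicBox {k : ℕ} {z : ℂ} (hz : z ∈ dyadicBox k) : z.im ≠ 0 := by
  intro h
  have hlower := hz.2.1
  rw [h, abs_zero] at hlower
  exact (pow_pos two_pos k).not_ge hlower

theorem half_mem_dyadicBox {k : ℕ} {z : ℂ} (hz : z ∈ dyadicBox (k + 1)) :
    z / 2 ∈ dyadicBox k := by
  obtain ⟨⟨h0, h1⟩, h2, h3⟩ := hz
  refine ⟨⟨?_, ?_⟩, ?_, ?_⟩ <;> simp [abs_div, pow_succ] at * <;> linarith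

theorem half_add_half_mem_dyadicBox {k : ℕ} {z : ℂ} (hz : z ∈ dyadicBox (k + 1)) :
    z / 2 + 1 / 2 ∈ dyadicBox k := by
  obtain ⟨⟨h0, h1⟩, h2, h3⟩ := hz
  refine ⟨⟨?_, ?_⟩, ?_, ?_⟩ <;> simp [abs_div, pow_succ] at * <;> linarith

theorem le_re_digamma_of_mem_dyadicBox {C : ℝ} (hC : ∀ z ∈ dyadicBox 0, C ≤ (digamma z).re)
    (k : ℕ) : ∀ z ∈ dyadicBox k, C + k * Real.log 2 ≤ (digamma z).re := by
  induction k with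
  | zero => simpa using hC
  | succ k ih =>
    intro z hz
    have hdup := digamma_add_digamma_add_half (z := z / 2)
      (ne_neg_natCast_of_im_ne_zero (by simpa using im_ne_zero_of_mem_dyadicBox hz))
    rw [mul_div_cancel₀ z two_ne_zero] at hdup
    have hdup_re := congrArg re hdup
    simp only [add_re, sub_re, mul_re, re_ofNat, im_ofNat, zero_mul, sub_zero, log_re,
      norm_ofNat] at hdup_re
    have h₁ := ih _ (half_mem_dyadicBox hz)
    have h₂ := ih _ (half_add_half_mem_dyadicBox hz)
    push_cast
    linarith

/-- There exists `M > 0` such that for all `t ∈ [0,1]` and `|y| > M`,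
`Re[Γ'(t+iy)/Γ(t+iy)] > 0`, i.e. the real part of the digamma function is positive. -/
theorem re_digamma_pos :
    ∃ M : ℝ, 0 < M ∧ ∀ t y : ℝ, 0 ≤ t → t ≤ 1 → M < |y| →
      0 < (deriv Complex.Gamma ((t : ℂ) + y * I) / Complex.Gamma ((t : ℂ) + y * I)).re := by
  obtain ⟨C, hC⟩ := (isCompact_dyadicBox 0).bddBelow_re_digamma fun z hz ↦
    ne_neg_natCast_of_im_ne_zero (im_ne_zero_of_mem_dyadicBox hz)
  have hlog : 0 < Real.log 2 := Real.log_pos one_lt_two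
  obtain ⟨N, hN⟩ := exists_nat_gt (-C / Real.log 2)
  rw [div_lt_iff₀ hlog] at hN
  refine ⟨2 ^ N, by positivity, fun t y ht₀ ht₁ hy ↦ ?_⟩
  obtain ⟨k, hk, hk'⟩ := exists_nat_pow_near (one_le_pow₀ one_le_two |>.trans hy.le) one_lt_two
  have hNk : N ≤ k := Nat.lt_succ_iff.mp ((pow_lt_pow_iff_right₀ one_lt_two).mp (hy.trans hk'))
  have hbound := le_re_digamma_of_mem_dyadicBox (fun z hz ↦ hC ⟨z, hz, rfl⟩) k (t + y * I)
    ⟨by simp [ht₀, ht₁], by simp [hk, hk'.le]⟩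
  have hmono : (N : ℝ) * Real.log 2 ≤ k * Real.log 2 := by gcongr
  change 0 < (digamma _).re
  linarith
end
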